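/- Let f = h + conj(g) be a sense-preserving harmonic mapping on the unit disk D with β(f) < ∞, let c₀ = g'(0)/h'(0), and write aₙ = h⁽ⁿ⁾(0)/n!, bₙ = g⁽ⁿ⁾(0)/n!. Then for every n ≥ 2: max{ |aₙ|, |bₙ| } ≤ β(f)·(e/3)^{3/2}·√((1+|c₀|)/(1−|c₀|))·√(n+2). -/

import Mathlib

/-! Schwarz–Pick applied to the dilatation `ω = g'/h'` gives
`1 - |ω z|² ≥ (1 - |z|²)(1 - |c₀|)/(1 + |c₀|)`; since `J_f = |h'|²(1 - |ω|²)`, the definition of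
`β(f)` gives `|g'(z)| < |h'(z)| ≤ β(f) √((1 + |c₀|)/(1 - |c₀|)) (1 - |z|²)^{-3/2}`.
Cauchy's estimate for `h'` and `g'` on the circle `|z| = r` bounds `n |aₙ|` and `n |bₙ|` by this
quantity times `r^{1-n}`. Taking `r² = (n - 1)/(n + 2)`, the claim reduces to
`((n + 2)/(n - 1))^{n-1} ((n + 2)/n)² ≤ e³`, which follows from a Padé bound on `log (1 + u)`. -/

open Metric Set Filter

/-- Jacobian of the harmonic mapping `f = h + conj g`. -/
noncomputable def jacobian (h g : ℂ → ℂ) (z : ℂ) : ℝ :=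
  ‖deriv h z‖ ^ 2 - ‖deriv g z‖ ^ 2

/-- The Bloch-type seminorm `β(f) = sup_{z ∈ 𝔻} (1 - |z|²) √|J_f(z)|`. -/
noncomputable def betaH (h g : ℂ → ℂ) : ℝ :=
  sSup ((fun z => (1 - ‖z‖ ^ 2) * Real.sqrt |jacobian h g z|) '' Metric.ball 0 1)

/-- Membership in the Bloch-type class `B_H`, i.e. `β(f) < ∞`. -/
def InBH (h g : ℂ → ℂ) : Prop :=
  BddAbove ((fun z => (1 - ‖z‖ ^ 2) * Real.sqrt |jacobian h g z|) '' Metric.ball 0 1)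

open ComplexConjugate Real

/-- The right-hand side is the `[2/1]` Padé approximant of `log (1 + u)`. -/
theorem Real.log_one_add_le_mul_add_div {u : ℝ} (hu : 0 ≤ u) :
    log (1 + u) ≤ u * (6 + u) / (6 + 4 * u) := by
  let φ : ℝ → ℝ := fun x => x * (6 + x) / (6 + 4 * x) - log (1 + x)
  have hφ : ∀ x, 0 ≤ x → HasDerivAt φ (4 * x ^ 3 / ((6 + 4 * x) ^ 2 * (1 + x))) x := by
    intro x hx
    have hden : 6 + 4 * x ≠ 0 := by positivity
    have hlog : 1 + x ≠ 0 := by positivity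
    refine ((((hasDerivAt_id x).mul ((hasDerivAt_id x).const_add 6)).div
      (((hasDerivAt_id x).const_mul 4).const_add 6) hden).sub
      (((hasDerivAt_id x).const_add 1).log hlog)).congr_deriv ?_
    simp only [Pi.mul_apply, id]
    field_simp
    ring
  have hmono : MonotoneOn φ (Ici 0) := by
    refine monotoneOn_of_deriv_nonneg (convex_Ici 0) ?_ ?_ fun x hx => ?_
    · exact HasDerivAt.continuousOn fun x hx => hφ x hx
    · exact fun x hx => (hφ x (interior_subset hx)).differentiableAt.differentiableWithinAt
    · rw [interior_Ici] at hx
      have hx : 0 ≤ x := le_of_lt hx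
      rw [(hφ x hx).deriv]
      positivity
  simpa [φ] using hmono self_mem_Ici hu hu

theorem one_add_three_div_pow_mul_le_exp_three {m : ℕ} (hm : 1 ≤ m) :
    (1 + 3 / m) ^ m * (1 + 2 / (m + 1)) ^ 2 ≤ exp 3 := by
  have hm1 : (1 : ℝ) ≤ m := by exact_mod_cast hm
  have one_add_le_exp : ∀ u : ℝ, 0 ≤ u → 1 + u ≤ exp (u * (6 + u) / (6 + 4 * u)) :=
    fun u hu => (log_le_iff_le_exp (by positivity)).mp (log_one_add_le_mul_add_div hu)
  calc (1 + 3 / m) ^ m * (1 + 2 / (m + 1)) ^ 2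
      ≤ exp (3 / m * (6 + 3 / m) / (6 + 4 * (3 / m))) ^ m
        * exp (2 / (m + 1) * (6 + 2 / (m + 1)) / (6 + 4 * (2 / (m + 1)))) ^ 2 := by
        gcongr <;> exact one_add_le_exp _ (by positivity)
    _ = exp (3 * (2 * m + 1) / (2 * m + 4) + 4 * (3 * m + 4) / ((m + 1) * (3 * m + 7))) := by
        rw [← exp_nat_mul, ← exp_nat_mul, ← exp_add]
        congr 1
        field_simp
        ring
    _ ≤ exp 3 := by
        gcongr
        rw [div_add_div _ _ (by positivity) (by positivity), div_le_iff₀ (by positivity)]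
        nlinarith

theorem Real.rpow_three_div_two_sq {x : ℝ} (hx : 0 ≤ x) : (x ^ (3 / 2 : ℝ)) ^ 2 = x ^ 3 := by
  rw [← rpow_mul_natCast hx]
  norm_num

/-- `r² = m / (m + 3)` is the radius minimising `(1 - r²)^{-3/2} r^{-m}`. -/
theorem one_div_rpow_mul_pow_le {m : ℕ} (hm : 1 ≤ m) {r : ℝ} (hr0 : 0 ≤ r)
    (hr : r ^ 2 = m / (m + 3)) :
    1 / ((1 - r ^ 2) ^ (3 / 2 : ℝ) * ((m + 1) * r ^ m))
      ≤ (exp 1 / 3) ^ (3 / 2 : ℝ) * √(m + 3) := by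
  have hm0 : (0 : ℝ) < m := by exact_mod_cast hm
  have hr1 : 1 - r ^ 2 = 3 / (m + 3) := by
    rw [hr]
    field_simp
    ring
  have hkey : ((m + 3) / m) ^ m * ((m + 3) / (m + 1)) ^ 2 ≤ exp 3 := by
    convert one_add_three_div_pow_mul_le_exp_three hm using 3
    · field_simp
    · field_simp
      ring
  rw [hr1]
  refine (pow_le_pow_iff_left₀ (by positivity) (by positivity) two_ne_zero).mp ?_
  rw [div_pow, mul_pow, mul_pow, mul_pow, rpow_three_div_two_sq (by positivity),
    rpow_three_div_two_sq (by positivity), sq_sqrt (by positivity), ← pow_mul, mul_comm m 2,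
    pow_mul, hr]
  calc (1 : ℝ) ^ 2 / ((3 / (m + 3)) ^ 3 * ((m + 1) ^ 2 * (m / (m + 3)) ^ m))
      = ((m + 3) / m) ^ m * ((m + 3) / (m + 1)) ^ 2 * ((m + 3) / 27) := by
        simp only [div_pow]
        field_simp
        norm_num
    _ ≤ exp 3 * ((m + 3) / 27) := by gcongr
    _ = (exp 1 / 3) ^ 3 * (m + 3) := by rw [div_pow, exp_one_pow, Nat.cast_ofNat]; ring

theorem Complex.norm_one_sub_conj_mul_sq_sub_norm_sub_sq (c w : ℂ) :
    ‖1 - conj c * w‖ ^ 2 - ‖w - c‖ ^ 2 = (1 - ‖c‖ ^ 2) * (1 - ‖w‖ ^ 2) := by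
  simp only [Complex.sq_norm, Complex.normSq_apply, Complex.sub_re, Complex.sub_im,
    Complex.mul_re, Complex.mul_im, Complex.one_re, Complex.one_im, Complex.conj_re,
    Complex.conj_im]
  ring

theorem Complex.norm_sub_lt_norm_one_sub_conj_mul {c w : ℂ} (hc : ‖c‖ < 1) (hw : ‖w‖ < 1) :
    ‖w - c‖ < ‖1 - conj c * w‖ := by
  have hpos : 0 < (1 - ‖c‖ ^ 2) * (1 - ‖w‖ ^ 2) := by
    have := norm_nonneg c
    have := norm_nonneg w
    apply mul_pos <;> nlinarith
  have := norm_one_sub_conj_mul_sq_sub_norm_sub_sq c w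
  exact lt_of_pow_lt_pow_left₀ 2 (norm_nonneg _) (by linarith)

/-- Schwarz–Pick: the Schwarz lemma applied to `ω` followed by the disc automorphism
`w ↦ (w - ω 0) / (1 - conj (ω 0) * w)`. -/
theorem Complex.norm_sub_le_mul_norm_one_sub_conj_mul {ω : ℂ → ℂ}
    (hω : DifferentiableOn ℂ ω (ball 0 1)) (hmaps : MapsTo ω (ball 0 1) (ball 0 1)) {z : ℂ}
    (hz : z ∈ ball (0 : ℂ) 1) : ‖ω z - ω 0‖ ≤ ‖z‖ * ‖1 - conj (ω 0) * ω z‖ := by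
  set c := ω 0
  have hc : ‖c‖ < 1 := mem_ball_zero_iff.mp (hmaps (mem_ball_self one_pos))
  have hlt : ∀ x ∈ ball (0 : ℂ) 1, ‖ω x - c‖ < ‖1 - conj c * ω x‖ := fun x hx =>
    norm_sub_lt_norm_one_sub_conj_mul hc (mem_ball_zero_iff.mp (hmaps hx))
  have hden : ∀ x ∈ ball (0 : ℂ) 1, 1 - conj c * ω x ≠ 0 := fun x hx =>
    norm_pos_iff.mp ((norm_nonneg _).trans_lt (hlt x hx))
  have hschwarz := norm_le_norm_of_mapsTo_ball
    (f := fun x => (ω x - c) / (1 - conj c * ω x))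
    ((hω.sub_const c).div ((differentiableOn_const 1).sub (hω.const_mul _)) hden)
    (fun x hx => by
      rw [mem_closedBall_zero_iff, norm_div]
      exact div_le_one_of_le₀ (hlt x hx).le (norm_nonneg _))
    (by simp [c]) (mem_ball_zero_iff.mp hz)
  rwa [norm_div, div_le_iff₀ (norm_pos_iff.mpr (hden z hz))] at hschwarz

theorem Complex.one_sub_norm_sq_mul_one_sub_norm_le {ω : ℂ → ℂ}
    (hω : DifferentiableOn ℂ ω (ball 0 1)) (hmaps : MapsTo ω (ball 0 1) (ball 0 1)) {z : ℂ}
    (hz : z ∈ ball (0 : ℂ) 1) :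
    (1 - ‖z‖ ^ 2) * (1 - ‖ω 0‖) ≤ (1 + ‖ω 0‖) * (1 - ‖ω z‖ ^ 2) := by
  set c := ω 0
  set d := ‖1 - conj c * ω z‖
  have hc : ‖c‖ < 1 := mem_ball_zero_iff.mp (hmaps (mem_ball_self one_pos))
  have hz1 : ‖z‖ < 1 := mem_ball_zero_iff.mp hz
  have hw : ‖ω z‖ < 1 := mem_ball_zero_iff.mp (hmaps hz)
  have hpick := norm_sub_le_mul_norm_one_sub_conj_mul hω hmaps hz
  have hid := norm_one_sub_conj_mul_sq_sub_norm_sub_sq c (ω z)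
  have hd : 1 - ‖c‖ ≤ d := by
    calc 1 - ‖c‖ ≤ ‖(1 : ℂ)‖ - ‖conj c * ω z‖ := by
          rw [norm_one, norm_mul, norm_conj]
          nlinarith [norm_nonneg c, norm_nonneg (ω z)]
      _ ≤ d := norm_sub_norm_le _ _
  have hkey : (1 - ‖z‖ ^ 2) * d ^ 2 ≤ (1 - ‖c‖) * ((1 + ‖c‖) * (1 - ‖ω z‖ ^ 2)) := by
    nlinarith [mul_le_mul hpick hpick (norm_nonneg _) (by positivity)]
  have hz2 : 0 ≤ 1 - ‖z‖ ^ 2 := by nlinarith [norm_nonneg z]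
  refine le_of_mul_le_mul_left ?_ (by linarith : 0 < 1 - ‖c‖)
  calc (1 - ‖c‖) * ((1 - ‖z‖ ^ 2) * (1 - ‖c‖)) = (1 - ‖z‖ ^ 2) * (1 - ‖c‖) ^ 2 := by ring
    _ ≤ (1 - ‖z‖ ^ 2) * d ^ 2 := by gcongr
    _ ≤ _ := hkey

theorem norm_iteratedDeriv_succ_div_factorial_le {F : ℂ → ℂ} {c : ℂ} {R r M : ℝ}
    (hF : DifferentiableOn ℂ F (ball c R)) (hr0 : 0 < r) (hrR : r < R)
    (hM : ∀ z ∈ sphere c r, ‖deriv F z‖ ≤ M) (m : ℕ) :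
    ‖iteratedDeriv (m + 1) F c / (m + 1).factorial‖ ≤ M / ((m + 1) * r ^ m) := by
  have hF' : DiffContOnCl ℂ (deriv F) (ball c r) :=
    (hF.analyticOnNhd isOpen_ball).deriv.differentiableOn.diffContOnCl_ball
      (closedBall_subset_ball hrR)
  have hcauchy := Complex.norm_iteratedDeriv_le_of_forall_mem_sphere_norm_le m hr0 hF' hM
  rw [iteratedDeriv_succ', norm_div, Complex.norm_natCast, Nat.factorial_succ, Nat.cast_mul,
    div_le_div_iff₀ (by positivity) (by positivity)]
  calc ‖iteratedDeriv m (deriv F) c‖ * ((m + 1) * r ^ m)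
      ≤ m.factorial * M / r ^ m * ((m + 1) * r ^ m) := by gcongr
    _ = M * ((m + 1 : ℕ) * m.factorial) := by
        field_simp
        push_cast
        ring

section Harmonic

variable {h g : ℂ → ℂ}

noncomputable def dilatation (h g : ℂ → ℂ) (z : ℂ) : ℂ :=
  deriv g z / deriv h z

theorem jacobian_eq_mul_one_sub_norm_dilatation_sq {z : ℂ} (hz : deriv h z ≠ 0) :
    jacobian h g z = ‖deriv h z‖ ^ 2 * (1 - ‖dilatation h g z‖ ^ 2) := by
  rw [jacobian, dilatation, norm_div]
  field_simp

theorem norm_dilatation_lt_one {z : ℂ} (hz : ‖deriv g z‖ < ‖deriv h z‖) :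
    ‖dilatation h g z‖ < 1 := by
  rw [dilatation, norm_div]
  exact (div_lt_one ((norm_nonneg _).trans_lt hz)).mpr hz

theorem differentiableOn_dilatation (hh : DifferentiableOn ℂ h (ball 0 1))
    (hg : DifferentiableOn ℂ g (ball 0 1)) (hh' : ∀ z ∈ ball (0 : ℂ) 1, deriv h z ≠ 0) :
    DifferentiableOn ℂ (dilatation h g) (ball 0 1) :=
  (hg.analyticOnNhd isOpen_ball).deriv.differentiableOn.div
    (hh.analyticOnNhd isOpen_ball).deriv.differentiableOn hh'

theorem betaH_nonneg (hβ : InBH h g) : 0 ≤ betaH h g :=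
  le_trans (by simp) (le_csSup hβ (mem_image_of_mem _ (mem_ball_self one_pos)))

theorem one_sub_norm_sq_sq_mul_abs_jacobian_le (hβ : InBH h g) {z : ℂ}
    (hz : z ∈ ball (0 : ℂ) 1) : (1 - ‖z‖ ^ 2) ^ 2 * |jacobian h g z| ≤ betaH h g ^ 2 := by
  have hz2 : 0 ≤ 1 - ‖z‖ ^ 2 := by nlinarith [norm_nonneg z, mem_ball_zero_iff.mp hz]
  have := pow_le_pow_left₀ (by positivity) (le_csSup hβ (mem_image_of_mem _ hz)) 2
  rwa [mul_pow, sq_sqrt (abs_nonneg _)] at this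

theorem one_sub_norm_sq_pow_three_mul_norm_deriv_sq_le (hh : DifferentiableOn ℂ h (ball 0 1))
    (hg : DifferentiableOn ℂ g (ball 0 1))
    (hsp : ∀ z ∈ ball (0 : ℂ) 1, ‖deriv g z‖ < ‖deriv h z‖) (hβ : InBH h g) {z : ℂ}
    (hz : z ∈ ball (0 : ℂ) 1) :
    (1 - ‖z‖ ^ 2) ^ 3 * ‖deriv h z‖ ^ 2 * (1 - ‖dilatation h g 0‖)
      ≤ betaH h g ^ 2 * (1 + ‖dilatation h g 0‖) := by
  have hh' : ∀ x ∈ ball (0 : ℂ) 1, deriv h x ≠ 0 := fun x hx =>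
    norm_pos_iff.mp ((norm_nonneg _).trans_lt (hsp x hx))
  have hpick := Complex.one_sub_norm_sq_mul_one_sub_norm_le
    (differentiableOn_dilatation hh hg hh')
    (fun x hx => mem_ball_zero_iff.mpr (norm_dilatation_lt_one (hsp x hx))) hz
  have hJ0 : 0 ≤ jacobian h g z := sub_nonneg.mpr (by gcongr; exact (hsp z hz).le)
  have hbloch := one_sub_norm_sq_sq_mul_abs_jacobian_le hβ hz
  rw [abs_of_nonneg hJ0, jacobian_eq_mul_one_sub_norm_dilatation_sq (hh' z hz)] at hbloch
  have hz2 : 0 ≤ 1 - ‖z‖ ^ 2 := by nlinarith [norm_nonneg z, mem_ball_zero_iff.mp hz]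
  calc (1 - ‖z‖ ^ 2) ^ 3 * ‖deriv h z‖ ^ 2 * (1 - ‖dilatation h g 0‖)
      = (1 - ‖z‖ ^ 2) ^ 2 * ‖deriv h z‖ ^ 2 * ((1 - ‖z‖ ^ 2) * (1 - ‖dilatation h g 0‖)) := by
        ring
    _ ≤ (1 - ‖z‖ ^ 2) ^ 2 * ‖deriv h z‖ ^ 2
          * ((1 + ‖dilatation h g 0‖) * (1 - ‖dilatation h g z‖ ^ 2)) := by
        gcongr
    _ = (1 - ‖z‖ ^ 2) ^ 2 * (‖deriv h z‖ ^ 2 * (1 - ‖dilatation h g z‖ ^ 2))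
          * (1 + ‖dilatation h g 0‖) := by
        ring
    _ ≤ betaH h g ^ 2 * (1 + ‖dilatation h g 0‖) := by gcongr

theorem norm_deriv_mul_one_sub_norm_sq_rpow_le (hh : DifferentiableOn ℂ h (ball 0 1))
    (hg : DifferentiableOn ℂ g (ball 0 1))
    (hsp : ∀ z ∈ ball (0 : ℂ) 1, ‖deriv g z‖ < ‖deriv h z‖) (hβ : InBH h g) {z : ℂ}
    (hz : z ∈ ball (0 : ℂ) 1) :
    ‖deriv h z‖ * (1 - ‖z‖ ^ 2) ^ (3 / 2 : ℝ)
      ≤ betaH h g * √((1 + ‖dilatation h g 0‖) / (1 - ‖dilatation h g 0‖)) := by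
  have hc := norm_dilatation_lt_one (hsp 0 (mem_ball_self one_pos))
  have hz2 : 0 ≤ 1 - ‖z‖ ^ 2 := by nlinarith [norm_nonneg z, mem_ball_zero_iff.mp hz]
  have hβ0 := betaH_nonneg hβ
  refine (pow_le_pow_iff_left₀ (by positivity) (by positivity) two_ne_zero).mp ?_
  rw [mul_pow, mul_pow, rpow_three_div_two_sq hz2,
    sq_sqrt (div_nonneg (by positivity) (by linarith)), ← mul_div_assoc,
    le_div_iff₀ (by linarith)]
  linarith [one_sub_norm_sq_pow_three_mul_norm_deriv_sq_le hh hg hsp hβ hz]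

theorem norm_iteratedDeriv_succ_div_factorial_le_betaH {F : ℂ → ℂ}
    (hF : DifferentiableOn ℂ F (ball 0 1)) (hFh : ∀ z ∈ ball (0 : ℂ) 1, ‖deriv F z‖ ≤ ‖deriv h z‖)
    (hh : DifferentiableOn ℂ h (ball 0 1)) (hg : DifferentiableOn ℂ g (ball 0 1))
    (hsp : ∀ z ∈ ball (0 : ℂ) 1, ‖deriv g z‖ < ‖deriv h z‖) (hβ : InBH h g) {r : ℝ}
    (hr0 : 0 < r) (hr1 : r < 1) (m : ℕ) :
    ‖iteratedDeriv (m + 1) F 0 / (m + 1).factorial‖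
      ≤ betaH h g * √((1 + ‖dilatation h g 0‖) / (1 - ‖dilatation h g 0‖))
        * (1 / ((1 - r ^ 2) ^ (3 / 2 : ℝ) * ((m + 1) * r ^ m))) := by
  refine (norm_iteratedDeriv_succ_div_factorial_le hF hr0 hr1 (fun z hz => ?_) m).trans_eq
    (by rw [div_div, mul_one_div])
  rw [mem_sphere_zero_iff_norm] at hz
  have hz' : z ∈ ball (0 : ℂ) 1 := mem_ball_zero_iff.mpr (hz ▸ hr1)
  rw [le_div_iff₀ (rpow_pos_of_pos (by nlinarith) _), ← hz]
  exact (mul_le_mul_of_nonneg_right (hFh z hz') (rpow_nonneg (by nlinarith) _)).trans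
    (norm_deriv_mul_one_sub_norm_sq_rpow_le hh hg hsp hβ hz')

end Harmonic

/-- **Coefficient estimates in `B_H`.**  If `f = h + conj g` is sense-preserving with
`β(f) < ∞`, `c₀ = g'(0)/h'(0)`, `aₙ = h⁽ⁿ⁾(0)/n!` and `bₙ = g⁽ⁿ⁾(0)/n!`, then for `n ≥ 2`:
`max{|aₙ|, |bₙ|} ≤ β(f)·(e/3)^{3/2}·√((1+|c₀|)/(1-|c₀|))·√(n+2)`. -/
theorem coefficient_estimates_BH (h g : ℂ → ℂ) (c₀ : ℂ)
    (hh : DifferentiableOn ℂ h (Metric.ball 0 1))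
    (hg : DifferentiableOn ℂ g (Metric.ball 0 1))
    (hsp : ∀ z ∈ Metric.ball (0 : ℂ) 1, ‖deriv g z‖ < ‖deriv h z‖)
    (hβ : InBH h g) (hc₀ : c₀ = deriv g 0 / deriv h 0) :
    ∀ n : ℕ, 2 ≤ n →
      max ‖iteratedDeriv n h 0 / (n.factorial : ℂ)‖
          ‖iteratedDeriv n g 0 / (n.factorial : ℂ)‖
        ≤ betaH h g * (Real.exp 1 / 3) ^ ((3 : ℝ) / 2)
            * Real.sqrt ((1 + ‖c₀‖) / (1 - ‖c₀‖))
            * Real.sqrt ((n : ℝ) + 2) := by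
  intro n hn
  obtain ⟨m, rfl⟩ : ∃ m, n = m + 1 := ⟨n - 1, by omega⟩
  have hm : (0 : ℝ) < m := by exact_mod_cast (by omega : 0 < m)
  set r := √(m / (m + 3) : ℝ)
  have hr2 : r ^ 2 = m / (m + 3) := sq_sqrt (by positivity)
  have hr0 : 0 < r := sqrt_pos.mpr (by positivity)
  have hr1 : r < 1 := (sq_lt_one_iff₀ hr0.le).mp (by rw [hr2, div_lt_one (by positivity)]; linarith)
  have hB0 := mul_nonneg (betaH_nonneg hβ)
    (sqrt_nonneg ((1 + ‖dilatation h g 0‖) / (1 - ‖dilatation h g 0‖)))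
  rw [hc₀, show deriv g 0 / deriv h 0 = dilatation h g 0 from rfl,
    show ((m + 1 : ℕ) : ℝ) + 2 = m + 3 by push_cast; ring]
  calc _ ≤ betaH h g * √((1 + ‖dilatation h g 0‖) / (1 - ‖dilatation h g 0‖))
          * (1 / ((1 - r ^ 2) ^ (3 / 2 : ℝ) * ((m + 1) * r ^ m))) :=
        max_le (norm_iteratedDeriv_succ_div_factorial_le_betaH hh (fun _ _ => le_rfl) hh hg hsp hβ
            hr0 hr1 m)
          (norm_iteratedDeriv_succ_div_factorial_le_betaH hg (fun z hz => (hsp z hz).le) hh hg hsp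
            hβ hr0 hr1 m)
    _ ≤ betaH h g * √((1 + ‖dilatation h g 0‖) / (1 - ‖dilatation h g 0‖))
          * ((exp 1 / 3) ^ (3 / 2 : ℝ) * √(m + 3)) :=
        mul_le_mul_of_nonneg_left (one_div_rpow_mul_pow_le (by omega) hr0.le hr2) hB0
    _ = _ := by ring
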